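/- arXiv:1509.04139 — 2 statements merged into one kernel-verified Lean document; each statement's English description precedes it below -/
import Mathlib

section
/- For β ∈ (0,1), a ∈ ℝ, and h continuously differentiable on [a,b], the Caputo derivative admits the generator-form representation D^β_{a+*}h(t) = (1/Γ(−β)) ∫₀^{t−a} (h(t−r) − h(t)) r^{−1−β} dr + (h(t) − h(a))/(Γ(1−β)(t−a)^β) for all t ∈ (a,b]. -/
/-- The Caputo fractional derivative of order `β ∈ (0,1)`. -/
noncomputable def caputoDeriv (a β : ℝ) (h : ℝ → ℝ) (t : ℝ) : ℝ :=
  (1 / Real.Gamma (1 - β)) * ∫ r in a..t, (t - r) ^ (-β) * deriv h r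

/-!
After the substitution `r ↦ t - r`, the Caputo integral becomes `∫₀ᵀ r^{-β} h'(t - r) dr` with
`T = t - a`. Integrating by parts against `φ(r) = h(t - r) - h(t)` trades the weakly singular
kernel `r^{-β}` for the hypersingular `r^{-1-β}`, which is integrable against `φ` because
`|φ(r)| ≤ K r` for a Lipschitz constant `K` of `h`. The same bound makes the boundary term
`r^{-β} φ(r)` vanish at `r = 0`, so no limiting argument is needed: it is continuous on `[0, T]`.
Finally `Γ(1 - β) = -β Γ(-β)`.
-/

open MeasureTheory Set Filter Topology
open scoped NNReal

section FractionalIntegrationByParts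

variable {φ : ℝ → ℝ} {β T : ℝ} {K : ℝ≥0}

lemma intervalIntegrable_of_abs_le_mul_rpow {ψ : ℝ → ℝ} {γ C : ℝ} (hγ : -1 < γ) (hT : 0 ≤ T)
    (hψ : AEStronglyMeasurable ψ (volume.restrict (Ioo 0 T)))
    (hbound : ∀ r ∈ Ioo 0 T, |ψ r| ≤ C * r ^ γ) :
    IntervalIntegrable ψ volume 0 T := by
  rw [intervalIntegrable_iff_integrableOn_Ioo_of_le hT]
  have hmaj : IntegrableOn (fun r : ℝ => C * r ^ γ) (Ioo 0 T) :=
    (intervalIntegrable_iff_integrableOn_Ioo_of_le hT).1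
      ((intervalIntegral.intervalIntegrable_rpow' hγ).const_mul C)
  exact hmaj.mono' hψ ((ae_restrict_mem measurableSet_Ioo).mono hbound)

lemma LipschitzOnWith.abs_le_mul_of_map_zero (hlip : LipschitzOnWith K φ (Icc 0 T))
    (hφ0 : φ 0 = 0) {r : ℝ} (hr : r ∈ Icc 0 T) : |φ r| ≤ K * r := by
  simpa [Real.dist_eq, hφ0, abs_of_nonneg hr.1] using
    hlip.dist_le_mul r hr 0 ⟨le_rfl, hr.1.trans hr.2⟩

lemma abs_rpow_neg_mul_le (hβ : β < 1) (hlip : LipschitzOnWith K φ (Icc 0 T)) (hφ0 : φ 0 = 0)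
    {r : ℝ} (hr : r ∈ Icc 0 T) : |r ^ (-β) * φ r| ≤ K * r ^ (1 - β) := by
  have hpow : r ^ (1 - β) = r ^ (-β) * r := by
    rw [show 1 - β = -β + 1 by ring, Real.rpow_add' hr.1 (by linarith), Real.rpow_one]
  rw [abs_mul, abs_of_nonneg (Real.rpow_nonneg hr.1 _), hpow]
  calc r ^ (-β) * |φ r| ≤ r ^ (-β) * (K * r) :=
        mul_le_mul_of_nonneg_left (hlip.abs_le_mul_of_map_zero hφ0 hr) (Real.rpow_nonneg hr.1 _)
    _ = K * (r ^ (-β) * r) := by ring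

lemma continuousOn_rpow_neg_mul (hβ : β < 1) (hlip : LipschitzOnWith K φ (Icc 0 T))
    (hφ0 : φ 0 = 0) : ContinuousOn (fun r => r ^ (-β) * φ r) (Icc 0 T) := by
  intro r hr
  rcases hr.1.eq_or_lt with rfl | hr0
  · have hlim : Tendsto (fun r : ℝ => (K : ℝ) * r ^ (1 - β)) (𝓝[Icc 0 T] 0) (𝓝 0) := by
      have := ((Real.continuousAt_rpow_const 0 (1 - β) (Or.inr (by linarith))).const_mul
        (K : ℝ)).tendsto.mono_left (nhdsWithin_le_nhds (s := Icc 0 T))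
      rwa [Real.zero_rpow (by linarith), mul_zero] at this
    have hW0 : (0 : ℝ) ^ (-β) * φ 0 = 0 := by rw [hφ0, mul_zero]
    rw [ContinuousWithinAt, hW0]
    exact squeeze_zero_norm' (eventually_nhdsWithin_of_forall fun r hr =>
      abs_rpow_neg_mul_le hβ hlip hφ0 hr) hlim
  · exact ((Real.continuousAt_rpow_const r _ (Or.inl hr0.ne')).continuousWithinAt.mul
      (hlip.continuousOn r hr))

lemma hasDerivAt_rpow_neg_mul {r : ℝ} (hr : 0 < r) (hφ : DifferentiableAt ℝ φ r) :
    HasDerivAt (fun r => r ^ (-β) * φ r)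
      (-β * (φ r * r ^ (-1 - β)) + r ^ (-β) * deriv φ r) r := by
  refine ((Real.hasDerivAt_rpow_const (p := -β) (Or.inl hr.ne')).mul hφ.hasDerivAt).congr_deriv ?_
  rw [show -β - 1 = -1 - β by ring]
  ring

lemma intervalIntegrable_rpow_neg_mul_deriv (hβ : β < 1) (hT : 0 ≤ T)
    (hlip : LipschitzOnWith K φ (Icc 0 T)) :
    IntervalIntegrable (fun r => r ^ (-β) * deriv φ r) volume 0 T := by
  refine intervalIntegrable_of_abs_le_mul_rpow (γ := -β) (C := K) (by linarith) hT
    (((measurable_id.pow_const _).mul (measurable_deriv φ)).aestronglyMeasurable) fun r hr => ?_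
  rw [abs_mul, abs_of_nonneg (Real.rpow_nonneg hr.1.le _), mul_comm, ← Real.norm_eq_abs]
  exact mul_le_mul_of_nonneg_right (norm_deriv_le_of_lipschitzOn (Icc_mem_nhds hr.1 hr.2) hlip)
    (Real.rpow_nonneg hr.1.le _)

lemma intervalIntegrable_mul_rpow_neg_one_sub (hβ : β < 1) (hT : 0 ≤ T)
    (hlip : LipschitzOnWith K φ (Icc 0 T)) (hφ0 : φ 0 = 0) :
    IntervalIntegrable (fun r => φ r * r ^ (-1 - β)) volume 0 T := by
  have hcont : ContinuousOn (fun r => φ r * r ^ (-1 - β)) (Ioo 0 T) := fun r hr =>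
    (hlip.continuousOn r (Ioo_subset_Icc_self hr)).mono Ioo_subset_Icc_self |>.mul
      (Real.continuousAt_rpow_const r _ (Or.inl hr.1.ne')).continuousWithinAt
  refine intervalIntegrable_of_abs_le_mul_rpow (γ := -β) (C := K) (by linarith) hT
    (hcont.aestronglyMeasurable measurableSet_Ioo) fun r hr => ?_
  have hpow : r ^ (-β) = r * r ^ (-1 - β) := by
    rw [mul_comm, ← Real.rpow_add_one hr.1.ne']; ring_nf
  rw [abs_mul, abs_of_nonneg (Real.rpow_nonneg hr.1.le _), hpow, ← mul_assoc]
  exact mul_le_mul_of_nonneg_right (hlip.abs_le_mul_of_map_zero hφ0 (Ioo_subset_Icc_self hr))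
    (Real.rpow_nonneg hr.1.le _)

theorem integral_rpow_neg_mul_deriv_eq (hβ : β < 1) (hT : 0 ≤ T)
    (hlip : LipschitzOnWith K φ (Icc 0 T)) (hdiff : DifferentiableOn ℝ φ (Ioo 0 T))
    (hφ0 : φ 0 = 0) :
    ∫ r in 0..T, r ^ (-β) * deriv φ r = T ^ (-β) * φ T + β * ∫ r in 0..T, φ r * r ^ (-1 - β) := by
  have hI₁ := intervalIntegrable_rpow_neg_mul_deriv hβ hT hlip
  have hI₂ := intervalIntegrable_mul_rpow_neg_one_sub hβ hT hlip hφ0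
  have hFTC := intervalIntegral.integral_eq_sub_of_hasDerivAt_of_le hT
    (continuousOn_rpow_neg_mul hβ hlip hφ0)
    (fun r hr => hasDerivAt_rpow_neg_mul hr.1 (hdiff.differentiableAt (Ioo_mem_nhds hr.1 hr.2)))
    ((hI₂.const_mul (-β)).add hI₁)
  rw [intervalIntegral.integral_add (hI₂.const_mul _) hI₁, intervalIntegral.integral_const_mul,
    hφ0, mul_zero, sub_zero] at hFTC
  linarith

end FractionalIntegrationByParts

section Reflection

variable {h : ℝ → ℝ} {a b t : ℝ}

lemma LipschitzOnWith.sub_comp_const_sub {K : ℝ≥0} (hK : LipschitzOnWith K h (Icc a b))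
    (ht : t ≤ b) : LipschitzOnWith K (fun r => h (t - r) - h t) (Icc 0 (t - a)) := by
  have hmaps : MapsTo (t - ·) (Icc 0 (t - a)) (Icc a b) := fun r hr =>
    ⟨by linarith [hr.2], by linarith [hr.1]⟩
  refine LipschitzOnWith.of_dist_le_mul fun x hx y hy => ?_
  have := hK.dist_le_mul _ (hmaps hx) _ (hmaps hy)
  rw [dist_sub_left] at this
  simpa only [dist_sub_right] using this

lemma DifferentiableOn.sub_comp_const_sub (hh : DifferentiableOn ℝ h (Ioo a b)) (ht : t ≤ b) :
    DifferentiableOn ℝ (fun r => h (t - r) - h t) (Ioo 0 (t - a)) :=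
  (hh.comp (differentiableOn_id.const_sub t) fun r hr =>
    ⟨by simp only [id]; linarith [hr.2], by simp only [id]; linarith [hr.1]⟩).sub_const (h t)

lemma integral_sub_rpow_mul_deriv (β : ℝ) :
    ∫ r in a..t, (t - r) ^ (-β) * deriv h r =
      -∫ r in 0..t - a, r ^ (-β) * deriv (fun r => h (t - r) - h t) r := by
  simp only [deriv_sub_const, deriv_comp_const_sub, mul_neg, intervalIntegral.integral_neg,
    neg_neg]
  simpa using intervalIntegral.integral_comp_sub_left (a := a) (b := t)
    (fun r => r ^ (-β) * deriv h (t - r)) t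

end Reflection

lemma div_Gamma_neg {β : ℝ} (hβ : β ≠ 0) (x : ℝ) :
    x / Real.Gamma (-β) = -β * x / Real.Gamma (1 - β) := by
  rw [← neg_add_eq_sub, Real.Gamma_add_one (neg_ne_zero.2 hβ),
    mul_div_mul_left _ _ (neg_ne_zero.2 hβ)]

theorem caputo_generator_form_general (a b β : ℝ)
    (hβ : β ∈ Set.Ioo (0 : ℝ) 1) (h : ℝ → ℝ)
    (hh : ContDiffOn ℝ 1 h (Set.Icc a b)) :
    ∀ t ∈ Set.Ioc a b,
      caputoDeriv a β h t =
        (1 / Real.Gamma (-β)) *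
          (∫ r in (0:ℝ)..(t - a), (h (t - r) - h t) * r ^ (-1 - β)) +
        (h t - h a) / (Real.Gamma (1 - β) * (t - a) ^ β) := by
  rintro t ⟨hat, htb⟩
  have hT : 0 < t - a := sub_pos.2 hat
  obtain ⟨K, hK⟩ := hh.exists_lipschitzOnWith one_ne_zero (convex_Icc a b) isCompact_Icc
  have hdiff : DifferentiableOn ℝ h (Ioo a b) :=
    (hh.differentiableOn one_ne_zero).mono Ioo_subset_Icc_self
  have hparts := integral_rpow_neg_mul_deriv_eq hβ.2 hT.le (hK.sub_comp_const_sub htb)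
    (hdiff.sub_comp_const_sub htb) (by simp)
  rw [caputoDeriv, integral_sub_rpow_mul_deriv, hparts, one_div_mul_eq_div,
    div_Gamma_neg hβ.1.ne', Real.rpow_neg hT.le, sub_sub_cancel]
  ring

theorem caputo_generator_form (a b β : ℝ) (hab : a < b)
    (hβ : β ∈ Set.Ioo (0 : ℝ) 1) (h : ℝ → ℝ)
    (hh : ContDiffOn ℝ 1 h (Set.Icc a b)) :
    ∀ t ∈ Set.Ioc a b,
      caputoDeriv a β h t =
        (1 / Real.Gamma (-β)) *
          (∫ r in (0:ℝ)..(t - a), (h (t - r) - h t) * r ^ (-1 - β)) +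
        (h t - h a) / (Real.Gamma (1 - β) * (t - a) ^ β) :=
  caputo_generator_form_general a b β hβ h hh
end

section
/- For β ∈ (0,1), λ ∈ ℝ and a ∈ ℝ, the function u(t) = E_β(−λ(t−a)^β) solves the Caputo fractional differential equation D^β_{a+*} u(t) = −λ u(t) for t ∈ (a,b], with u(a) = 1. -/
/-!
On `(a, ∞)` the solution expands as
`u(s) = 1 + ∑ₖ (-λ)^(k+1) (s - a)^((k+1)β) / Γ((k+1)β + 1)`.
The coefficients `1 / Γ(jβ + 1)` decay faster than any geometric sequence, since log-convexity
of `Γ` gives `Γ(x) / Γ(x + β) → 0`; so the series may be differentiated term by term, and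
`(s - a)^v / Γ(v + 1)` has derivative `(s - a)^(v-1) / Γ(v)`. By the Beta integral, the
fractional integral of order `1 - β` sends `(s - a)^(v-1) / Γ(v)` to `(s - a)^(v-β) / Γ(v - β + 1)`,
so the Caputo derivative turns the term of index `k + 1` into the term of index `k`. Integral and
sum commute because the kernels are nonnegative and the absolute series is again a Mittag-Leffler
series, and the shifted sum is `-λ u`.
-/

/-- The (real) Mittag-Leffler function `E_β`. -/
noncomputable def mittagLeffler (β x : ℝ) : ℝ :=
  ∑' j : ℕ, x ^ j / Real.Gamma (j * β + 1)

open MeasureTheory Real Set Filter intervalIntegral Topology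

namespace Real

theorem Gamma_add_one_le_Gamma_add_mul_rpow {x β : ℝ} (hx : 0 < x) (hβ0 : 0 < β) (hβ1 : β < 1) :
    Gamma (x + 1) ≤ Gamma (x + β) * (x + β) ^ (1 - β) := by
  have hxβ : 0 < x + β := by linarith
  have hΓ : 0 < Gamma (x + β) := Gamma_pos_of_pos hxβ
  have hconv := Gamma_mul_add_mul_le_rpow_Gamma_mul_rpow_Gamma (by linarith : 0 < x + β + 1) hxβ
    (sub_pos.2 hβ1) hβ0 (by ring)
  calc Gamma (x + 1) = Gamma ((1 - β) * (x + β + 1) + β * (x + β)) := by ring_nf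
    _ ≤ Gamma (x + β + 1) ^ (1 - β) * Gamma (x + β) ^ β := hconv
    _ = Gamma (x + β) * (x + β) ^ (1 - β) := by
      rw [Gamma_add_one hxβ.ne', mul_rpow hxβ.le hΓ.le, mul_comm ((x + β) ^ _), mul_assoc,
        mul_comm ((x + β) ^ _), ← mul_assoc, ← rpow_add hΓ, sub_add_cancel, rpow_one]

theorem tendsto_Gamma_div_Gamma_add_atTop {β : ℝ} (hβ0 : 0 < β) (hβ1 : β < 1) :
    Tendsto (fun x => Gamma x / Gamma (x + β)) atTop (𝓝 0) := by
  have hlim : Tendsto (fun x => 2 * (x + β) ^ (-β)) atTop (𝓝 0) := by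
    simpa using ((tendsto_rpow_neg_atTop hβ0).comp
      (tendsto_atTop_add_const_right _ β tendsto_id)).const_mul 2
  refine tendsto_of_tendsto_of_tendsto_of_le_of_le' tendsto_const_nhds hlim ?_ ?_
  · filter_upwards [eventually_gt_atTop 0] with x hx
    exact div_nonneg (Gamma_pos_of_pos hx).le (Gamma_pos_of_pos (by linarith)).le
  · filter_upwards [eventually_ge_atTop β, eventually_gt_atTop 0] with x hxβ hx
    have hxβ' : 0 < x + β := by linarith
    calc Gamma x / Gamma (x + β) ≤ (x + β) ^ (1 - β) / x := by
          rw [div_le_div_iff₀ (Gamma_pos_of_pos hxβ') hx, mul_comm, ← Gamma_add_one hx.ne',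
            mul_comm]
          exact Gamma_add_one_le_Gamma_add_mul_rpow hx hβ0 hβ1
      _ ≤ (x + β) ^ (1 - β) / ((x + β) / 2) := by
          gcongr
          linarith
      _ = 2 * (x + β) ^ (-β) := by
          rw [show -β = 1 - β - 1 by ring, rpow_sub_one hxβ'.ne']
          field_simp

end Real

theorem summable_pow_div_Gamma_mul_add_one {β : ℝ} (hβ0 : 0 < β) (hβ1 : β < 1) (x : ℝ) :
    Summable fun j : ℕ => x ^ j / Gamma (j * β + 1) := by
  have hΓ : ∀ j : ℕ, 0 < Gamma (j * β + 1) := fun j => Gamma_pos_of_pos (by positivity)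
  set R := |x| + 1
  have hR : 0 < R := by positivity
  have hratio : Tendsto (fun j : ℕ => ‖R ^ (j + 1) / Gamma ((j + 1 : ℕ) * β + 1)‖ /
      ‖R ^ j / Gamma (j * β + 1)‖) atTop (𝓝 0) := by
    have hlim := ((tendsto_Gamma_div_Gamma_add_atTop hβ0 hβ1).comp
      (tendsto_atTop_add_const_right _ 1
        (tendsto_natCast_atTop_atTop.atTop_mul_const hβ0))).const_mul R
    rw [mul_zero] at hlim
    refine hlim.congr fun j => ?_
    have := hΓ (j + 1)
    rw [norm_div, norm_div, norm_of_nonneg (hΓ j).le, norm_of_nonneg this.le,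
      norm_of_nonneg (pow_pos hR _).le, norm_of_nonneg (pow_pos hR _).le]
    push_cast at this ⊢
    simp only [Function.comp_apply]
    rw [show ((j : ℝ) + 1) * β + 1 = j * β + 1 + β by ring] at this ⊢
    field_simp
    ring
  have hR_summable := summable_of_ratio_test_tendsto_lt_one zero_lt_one
    (Eventually.of_forall fun j => (div_pos (pow_pos hR j) (hΓ j)).ne') hratio
  refine hR_summable.of_norm_bounded fun j => ?_
  rw [norm_div, norm_of_nonneg (hΓ j).le, norm_pow, norm_eq_abs]
  gcongr
  exact (lt_add_one _).le

theorem integral_rpow_mul_one_sub_rpow {u v : ℝ} (hu : 0 < u) (hv : 0 < v) :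
    ∫ x in (0 : ℝ)..1, x ^ (u - 1) * (1 - x) ^ (v - 1) = Gamma u * Gamma v / Gamma (u + v) := by
  apply Complex.ofReal_injective
  rw [← intervalIntegral.integral_ofReal]
  push_cast
  rw [← Complex.Gamma_ofReal, ← Complex.Gamma_ofReal, ← Complex.Gamma_ofReal, Complex.ofReal_add,
    ← Complex.betaIntegral_eq_Gamma_mul_div _ _ (by simpa) (by simpa), Complex.betaIntegral]
  refine integral_congr fun x hx => ?_
  rw [uIcc_of_le zero_le_one] at hx
  rw [Complex.ofReal_cpow hx.1, Complex.ofReal_cpow (sub_nonneg.2 hx.2)]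
  norm_num

theorem integral_sub_rpow_mul_sub_rpow {a t u v : ℝ} (hat : a < t) (hu : 0 < u) (hv : 0 < v) :
    ∫ r in a..t, (r - a) ^ (u - 1) * (t - r) ^ (v - 1) =
      Gamma u * Gamma v / Gamma (u + v) * (t - a) ^ (u + v - 1) := by
  have hta : 0 < t - a := sub_pos.2 hat
  have hsubst := smul_integral_comp_mul_add (a := 0) (b := 1)
    (fun r => (r - a) ^ (u - 1) * (t - r) ^ (v - 1)) (t - a) a
  simp only [mul_zero, zero_add, mul_one, sub_add_cancel, smul_eq_mul] at hsubst
  rw [← hsubst, ← integral_rpow_mul_one_sub_rpow hu hv, ← intervalIntegral.integral_mul_const,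
    ← intervalIntegral.integral_const_mul]
  refine integral_congr fun x hx => ?_
  rw [uIcc_of_le zero_le_one] at hx
  rw [add_sub_cancel_right, show t - ((t - a) * x + a) = (t - a) * (1 - x) by ring,
    mul_rpow hta.le hx.1, mul_rpow hta.le (sub_nonneg.2 hx.2),
    show u + v - 1 = 1 + (u - 1) + (v - 1) by ring, rpow_add hta, rpow_add hta, rpow_one]
  ring

theorem integral_sub_rpow_mul_sub_rpow_div_Gamma {a t α v : ℝ} (hat : a < t) (hα : 0 < α)
    (hv : 0 < v) :
    ∫ r in a..t, (t - r) ^ (α - 1) * ((r - a) ^ (v - 1) / Gamma v) =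
      Gamma α * ((t - a) ^ (v + α - 1) / Gamma (v + α)) := by
  have hΓ := Gamma_pos_of_pos hv
  simp_rw [mul_div_assoc', mul_comm ((t - _) ^ (α - 1))]
  rw [intervalIntegral.integral_div, integral_sub_rpow_mul_sub_rpow hat hv hα]
  field_simp

theorem intervalIntegral.integral_tsum_mul_of_nonneg {a t : ℝ} (hat : a ≤ t) {c : ℕ → ℝ}
    {g : ℕ → ℝ → ℝ} (hg : ∀ k, IntervalIntegrable (g k) volume a t)
    (hg0 : ∀ k, ∀ r ∈ Ioc a t, 0 ≤ g k r)
    (hsum : Summable fun k => |c k| * ∫ r in a..t, g k r) :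
    ∫ r in a..t, ∑' k, c k * g k r = ∑' k, c k * ∫ r in a..t, g k r := by
  simp only [integral_of_le hat, ← MeasureTheory.integral_const_mul] at hsum ⊢
  refine (integral_tsum_of_summable_integral_norm (fun k => ((hg k).1.const_mul (c k)))
    (hsum.congr fun k => setIntegral_congr_fun measurableSet_Ioc fun r hr => ?_)).symm
  rw [norm_mul, norm_eq_abs, norm_of_nonneg (hg0 k r hr)]

theorem hasDerivAt_sub_rpow_div_Gamma {a r v : ℝ} (hv : 0 < v) (hr : a < r) :
    HasDerivAt (fun s => (s - a) ^ v / Gamma (v + 1)) ((r - a) ^ (v - 1) / Gamma v) r := by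
  have h := (((hasDerivAt_id' r).sub_const a).rpow_const (p := v)
    (Or.inl (sub_pos.2 hr).ne')).div_const (Gamma (v + 1))
  rw [Gamma_add_one hv.ne'] at h ⊢
  refine h.congr_deriv ?_
  field_simp [(Gamma_pos_of_pos hv).ne']

theorem sub_rpow_sub_one_div_Gamma_le {a c y M v : ℝ} (hac : a < c) (hy : y ∈ Icc c M)
    (hv : 0 < v) :
    (y - a) ^ (v - 1) / Gamma v ≤ v / (c - a) * ((M - a) ^ v / Gamma (v + 1)) := by
  have hya : 0 < y - a := by linarith [hy.1]
  rw [rpow_sub_one hya.ne', Gamma_add_one hv.ne']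
  have := Gamma_pos_of_pos hv
  calc (y - a) ^ v / (y - a) / Gamma v ≤ (M - a) ^ v / (c - a) / Gamma v := by
        gcongr
        · exact rpow_nonneg (by linarith [hy.1, hy.2]) v
        · exact hy.2
        · exact hy.1
    _ = v / (c - a) * ((M - a) ^ v / (v * Gamma v)) := by
        field_simp

theorem neg_mul_rpow_pow {x : ℝ} (hx : 0 ≤ x) (l β : ℝ) (k : ℕ) :
    (-l * x ^ β) ^ k = (-l) ^ k * x ^ (k * β) := by
  rw [mul_pow, mul_comm (k : ℝ), rpow_mul_natCast hx]

theorem mittagLeffler_zero (β : ℝ) : mittagLeffler β 0 = 1 := by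
  rw [mittagLeffler, tsum_eq_single 0 fun j hj => by rw [zero_pow hj, zero_div]]
  simp

theorem mittagLeffler_neg_mul_rpow_eq_one_add_tsum {β l a s : ℝ} (hβ0 : 0 < β) (hβ1 : β < 1)
    (hs : a ≤ s) :
    mittagLeffler β (-l * (s - a) ^ β) =
      1 + ∑' k : ℕ, (-l) ^ (k + 1) * ((s - a) ^ ((k + 1) * β) / Gamma ((k + 1) * β + 1)) := by
  rw [mittagLeffler, (summable_pow_div_Gamma_mul_add_one hβ0 hβ1 _).tsum_eq_zero_add]
  congr 1
  · simp
  · refine tsum_congr fun k => ?_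
    rw [neg_mul_rpow_pow (sub_nonneg.2 hs), mul_div_assoc]
    push_cast
    rfl

theorem norm_neg_pow_mul_sub_rpow_div_Gamma_le {β l a c y M : ℝ} (hβ0 : 0 < β) (hac : a < c)
    (hy : y ∈ Icc c M) (k : ℕ) :
    ‖(-l) ^ (k + 1) * ((y - a) ^ ((k + 1) * β - 1) / Gamma ((k + 1) * β))‖ ≤
      β / (c - a) * ((2 * (|l| * (M - a) ^ β)) ^ (k + 1) / Gamma ((k + 1 : ℕ) * β + 1)) := by
  have hv : 0 < ((k : ℝ) + 1) * β := by positivity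
  have hMa : 0 ≤ M - a := by linarith [hy.1, hy.2]
  have hpow : (M - a) ^ (((k : ℝ) + 1) * β) = ((M - a) ^ β) ^ (k + 1) := by
    rw [← rpow_mul_natCast hMa, mul_comm β]
    push_cast
    rfl
  have htwo : (k : ℝ) + 1 ≤ 2 ^ (k + 1) := by exact_mod_cast Nat.lt_two_pow_self.le
  rw [norm_mul, norm_pow, norm_neg, norm_of_nonneg
    (div_nonneg (rpow_nonneg (by linarith [hy.1]) _) (Gamma_pos_of_pos hv).le)]
  calc ‖l‖ ^ (k + 1) * ((y - a) ^ (((k : ℝ) + 1) * β - 1) / Gamma (((k : ℝ) + 1) * β))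
      ≤ ‖l‖ ^ (k + 1) * (((k : ℝ) + 1) * β / (c - a) *
          ((M - a) ^ (((k : ℝ) + 1) * β) / Gamma (((k : ℝ) + 1) * β + 1))) := by
        gcongr
        exact sub_rpow_sub_one_div_Gamma_le hac hy hv
    _ = β / (c - a) * (((k : ℝ) + 1) * (|l| * (M - a) ^ β) ^ (k + 1) /
          Gamma (((k : ℝ) + 1) * β + 1)) := by
        rw [hpow, norm_eq_abs]
        ring
    _ ≤ β / (c - a) * ((2 * (|l| * (M - a) ^ β)) ^ (k + 1) / Gamma ((k + 1 : ℕ) * β + 1)) := by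
        rw [mul_pow 2]
        push_cast
        gcongr

theorem hasDerivAt_mittagLeffler_neg_mul_rpow {β l a r : ℝ} (hβ0 : 0 < β) (hβ1 : β < 1)
    (hr : a < r) :
    HasDerivAt (fun s => mittagLeffler β (-l * (s - a) ^ β))
      (∑' k : ℕ, (-l) ^ (k + 1) * ((r - a) ^ ((k + 1) * β - 1) / Gamma ((k + 1) * β))) r := by
  -- The derivative terms blow up at `a`, so they are only summably bounded away from it.
  obtain ⟨c, hac, hcr⟩ := exists_between hr
  have hr_mem : r ∈ Ioo c (r + 1) := ⟨hcr, lt_add_one r⟩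
  have hbound_summable : Summable fun k : ℕ => β / (c - a) *
      ((2 * (|l| * (r + 1 - a) ^ β)) ^ (k + 1) / Gamma ((k + 1 : ℕ) * β + 1)) :=
    ((summable_nat_add_iff 1).2 (summable_pow_div_Gamma_mul_add_one hβ0 hβ1 _)).mul_left _
  have hsummable_at_r : Summable fun k : ℕ =>
      (-l) ^ (k + 1) * ((r - a) ^ ((k + 1) * β) / Gamma ((k + 1) * β + 1)) := by
    refine ((summable_nat_add_iff 1).2
      (summable_pow_div_Gamma_mul_add_one hβ0 hβ1 (-l * (r - a) ^ β))).congr fun k => ?_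
    rw [neg_mul_rpow_pow (sub_nonneg.2 hr.le), mul_div_assoc]
    push_cast
    rfl
  have hseries := hasDerivAt_tsum_of_isPreconnected hbound_summable isOpen_Ioo isPreconnected_Ioo
    (fun k y hy => (hasDerivAt_sub_rpow_div_Gamma (by positivity) (hac.trans hy.1)).const_mul
      ((-l) ^ (k + 1)))
    (fun k y hy => norm_neg_pow_mul_sub_rpow_div_Gamma_le hβ0 hac (Ioo_subset_Icc_self hy) k)
    hr_mem hsummable_at_r hr_mem
  refine (hseries.const_add 1).congr_of_eventuallyEq ?_
  filter_upwards [Ioi_mem_nhds hr] with s hs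
  exact mittagLeffler_neg_mul_rpow_eq_one_add_tsum hβ0 hβ1 hs.le

theorem caputoDeriv_mittagLeffler_neg_mul_rpow {β l a t : ℝ} (hβ0 : 0 < β) (hβ1 : β < 1)
    (hat : a < t) :
    caputoDeriv a β (fun s => mittagLeffler β (-l * (s - a) ^ β)) t =
      -l * mittagLeffler β (-l * (t - a) ^ β) := by
  have hta : 0 ≤ t - a := sub_nonneg.2 hat.le
  have hv : ∀ k : ℕ, 0 < ((k : ℝ) + 1) * β := fun k => by positivity
  have hΓ : ∀ k : ℕ, 0 < Gamma (k * β + 1) := fun k => Gamma_pos_of_pos (by positivity)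
  set g : ℕ → ℝ → ℝ := fun k r =>
    (t - r) ^ (-β) * ((r - a) ^ ((k + 1) * β - 1) / Gamma ((k + 1) * β))
  have hg_integral (k : ℕ) :
      ∫ r in a..t, g k r = Gamma (1 - β) * ((t - a) ^ (k * β) / Gamma (k * β + 1)) := by
    have h := integral_sub_rpow_mul_sub_rpow_div_Gamma hat (sub_pos.2 hβ1) (hv k)
    rwa [show 1 - β - 1 = -β by ring, show ((k : ℝ) + 1) * β + (1 - β) - 1 = k * β by ring,
      show ((k : ℝ) + 1) * β + (1 - β) = k * β + 1 by ring] at h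
  have hg_integrable (k : ℕ) : IntervalIntegrable (g k) volume a t := by
    refine intervalIntegrable_of_integral_ne_zero ?_
    rw [hg_integral]
    have := Gamma_pos_of_pos (sub_pos.2 hβ1)
    have := hΓ k
    have := rpow_pos_of_pos (sub_pos.2 hat) (k * β)
    positivity
  have hg_nonneg (k : ℕ) (r : ℝ) (hr : r ∈ Ioc a t) : 0 ≤ g k r :=
    mul_nonneg (rpow_nonneg (sub_nonneg.2 hr.2) _)
      (div_nonneg (rpow_nonneg (sub_nonneg.2 hr.1.le) _) (Gamma_pos_of_pos (hv k)).le)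
  have hsum : Summable fun k : ℕ => |(-l) ^ (k + 1)| * ∫ r in a..t, g k r := by
    refine ((summable_pow_div_Gamma_mul_add_one hβ0 hβ1 (-l * (t - a) ^ β)).norm.mul_left
      (|l| * Gamma (1 - β))).congr fun k => ?_
    rw [hg_integral, neg_mul_rpow_pow hta, norm_div, norm_mul, norm_pow, norm_neg,
      norm_of_nonneg (rpow_nonneg hta _), norm_of_nonneg (hΓ k).le, abs_pow, abs_neg, pow_succ,
      norm_eq_abs]
    ring
  have hintegrand : ∀ r ∈ uIoc a t,
      (t - r) ^ (-β) * deriv (fun s => mittagLeffler β (-l * (s - a) ^ β)) r =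
        ∑' k : ℕ, (-l) ^ (k + 1) * g k r := by
    intro r hr
    rw [uIoc_of_le hat.le] at hr
    rw [(hasDerivAt_mittagLeffler_neg_mul_rpow hβ0 hβ1 hr.1).deriv, ← tsum_mul_left]
    exact tsum_congr fun k => by ring
  rw [caputoDeriv, integral_congr_ae (ae_of_all _ hintegrand),
    integral_tsum_mul_of_nonneg hat.le hg_integrable hg_nonneg hsum, mittagLeffler,
    ← tsum_mul_left, ← tsum_mul_left]
  refine tsum_congr fun k => ?_
  rw [hg_integral, neg_mul_rpow_pow hta]
  field_simp [(Gamma_pos_of_pos (sub_pos.2 hβ1)).ne']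
  ring

theorem mittagLeffler_solves_caputo_general (β l a b : ℝ) (hβ : β ∈ Set.Ioo (0 : ℝ) 1) :
    (∀ t ∈ Set.Ioc a b,
      caputoDeriv a β (fun s => mittagLeffler β (-l * (s - a) ^ β)) t =
        -l * mittagLeffler β (-l * (t - a) ^ β)) ∧
    mittagLeffler β (-l * ((a : ℝ) - a) ^ β) = 1 := by
  obtain ⟨hβ0, hβ1⟩ := hβ
  refine ⟨fun t ht => caputoDeriv_mittagLeffler_neg_mul_rpow hβ0 hβ1 ht.1, ?_⟩
  rw [sub_self, zero_rpow hβ0.ne', mul_zero, mittagLeffler_zero]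

theorem mittagLeffler_solves_caputo (β l a b : ℝ) (hβ : β ∈ Set.Ioo (0 : ℝ) 1)
    (hab : a < b) :
    (∀ t ∈ Set.Ioc a b,
      caputoDeriv a β (fun s => mittagLeffler β (-l * (s - a) ^ β)) t =
        -l * mittagLeffler β (-l * (t - a) ^ β)) ∧
    mittagLeffler β (-l * ((a : ℝ) - a) ^ β) = 1 :=
  mittagLeffler_solves_caputo_general β l a b hβ
end
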